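/- arXiv:2312.11807 — 2 statements merged into one kernel-verified Lean document; each statement's English description precedes it below -/
import Mathlib

section
/- Under the stated setting, the generalized binomial edge ideal of the complete r-partite graph G admits the decomposition J_{K_m,G} = J_{K_m,G̃} ∩ A_s ∩ A_{s+1} ∩ ⋯ ∩ A_r, where G̃ is the complete graph on [n]; moreover each of the ideals J_{K_m,G̃}, A_s, …, A_r is prime, so this is the minimal primary decomposition of J_{K_m,G}. -/
/-!
Setting: `ν : Fin r → ℕ` gives the sizes `n_1, …, n_r` of the parts of a complete
`r`-partite graph `G = K_{n_1,…,n_r}` on vertex set `Fin n`, `n = Σ ν i`.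
The part `V_k` consists of the vertices `j` with `partStart ν k ≤ j < partStart ν k + ν k`.
`Jpartite K m r n ν` is the generalized binomial edge ideal `J_{K_m,G}`,
`Jcomplete K m n` that of the complete graph `G̃ = K_n`, and `Aideal K m r n ν k`
is the ideal `A_k` generated by the variables `x_{uj}` with `j ∈ T_k = ⋃_{i ≠ k} V_i`.
-/

open MvPolynomial

/-- The first vertex (as a natural number) of the `k`-th part, i.e. `Σ_{i<k} ν i`. -/
def partStart {r : ℕ} (ν : Fin r → ℕ) (k : Fin r) : ℕ := ∑ i ∈ Finset.Iio k, ν i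

/-- The natural number `j` is a vertex lying in the `k`-th part `V_k`. -/
def inPart {r : ℕ} (ν : Fin r → ℕ) (k : Fin r) (j : ℕ) : Prop :=
  partStart ν k ≤ j ∧ j < partStart ν k + ν k

/-- Vertices `u`, `v` lie in different parts (no part contains both), i.e. `{u,v}`
is an edge of the complete multipartite graph. -/
def crossPair {r : ℕ} (ν : Fin r → ℕ) (u v : ℕ) : Prop :=
  ∀ k : Fin r, ¬ (inPart ν k u ∧ inPart ν k v)

/-- The generalized binomial edge ideal `J_{K_m,G}` of the complete multipartite graph
`G = K_{n_1,…,n_r}`, generated by the `2`-minors `x_{ik}x_{jl} - x_{il}x_{jk}`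
for `i < j` in `[m]` and edges `{k,l}` (`k < l`) of `G`. -/
noncomputable def Jpartite (K : Type) [Field K] (m r n : ℕ) (ν : Fin r → ℕ) :
    Ideal (MvPolynomial (Fin m × Fin n) K) :=
  Ideal.span {p | ∃ (i j : Fin m) (k l : Fin n), i < j ∧ k < l ∧ crossPair ν k l ∧
    p = X (i, k) * X (j, l) - X (i, l) * X (j, k)}

/-- The generalized binomial edge ideal `J_{K_m,G̃}` of the complete graph `G̃ = K_n`,
i.e. the ideal of all `2× 2` minors of the generic `m × n` matrix `(x_{ij})`. -/
noncomputable def Jcomplete (K : Type) [Field K] (m n : ℕ) : Ideal (MvPolynomial (Fin m × Fin n) K) :=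
  Ideal.span {p | ∃ (i j : Fin m) (k l : Fin n), i < j ∧ k < l ∧
    p = X (i, k) * X (j, l) - X (i, l) * X (j, k)}

/-- The prime ideal `A_k = (x_{uj} : u ∈ [m], j ∈ T_k)`, `T_k = ⋃_{i ≠ k} V_i` (for `ν k ≥ 2`). -/
noncomputable def Aideal (K : Type) [Field K] (m r n : ℕ) (ν : Fin r → ℕ) (k : Fin r) :
    Ideal (MvPolynomial (Fin m × Fin n) K) :=
  Ideal.span {p | ∃ (u : Fin m) (j : Fin n), ¬ inPart ν k (j : ℕ) ∧ p = X (u, j)}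

/-!
`J_{K_m,K_n}` is the kernel of the Segre map `x_{ij} ↦ s_i t_j`: the binomials `x^A - x^B` with
`A`, `B` of equal row and column sums span the kernel, and such `A`, `B` are connected by swaps
`x_{ik} x_{jl} ↦ x_{il} x_{jk}`, each of which is a `2`-minor relation. So `J_{K_m,K_n}` is prime,
and so is `A_t`, the kernel of the substitution killing the variables that generate it.

Every `2`-minor of the generic matrix is an edge minor of `G` or has both columns in one part `V_t`,
so `J_{K_m,K_n} = J_{K_m,G} + Σ_t Q_t`, where `Q_t` is spanned by the minors inside `V_t`, and
`Q_t = 0` if `n_t = 1`. Moreover `Q_t ⊆ A_w` for `w ≠ t`, and `Q_t ∩ A_t ⊆ A_t Q_t ⊆ J_{K_m,G}`: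
for `j ∉ V_t` the Plücker relation
`x_{uj} [i i' | k l] = x_{ik} [u i' | j l] - x_{i'k} [u i | j l] - x_{ul} [i i' | j k]`
writes `x_{uj}` times a minor of `Q_t` through edge minors of `G`. Hence if `g + Σ_t q_t` lies in
every `A_t` with `n_t ≥ 2`, then each `q_t` lies in `Q_t ∩ A_t ⊆ J_{K_m,G}`.
-/

theorem Finsupp.exists_eq_add_single_of_ne_zero {α : Type*} {A : α →₀ ℕ} {p : α}
    (h : A p ≠ 0) : ∃ A₀, A = A₀ + Finsupp.single p 1 := by
  obtain ⟨A₀, hA₀⟩ := exists_add_of_le (Finsupp.single_le_iff.mpr (Nat.one_le_iff_ne_zero.mpr h))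
  exact ⟨A₀, hA₀.trans (add_comm _ _)⟩

theorem RingHom.ker_inf_span_le_mul {A : Type*} [CommRing A] {ρ : A →+* A} {I : Ideal A}
    (hI : ∀ x, x - ρ x ∈ I) {S : Set A} (hS : ∀ g ∈ S, ρ g = g) :
    RingHom.ker ρ ⊓ Ideal.span S ≤ I * Ideal.span S := by
  rintro q ⟨hq, hqS⟩
  obtain ⟨n, c, g, rfl⟩ := Submodule.mem_span_set'.mp hqS
  have hsum : ∑ i, c i • (g i : A) = ∑ i, (c i - ρ (c i)) * g i := by
    rw [← sub_zero (∑ i, c i • (g i : A)), ← RingHom.mem_ker.mp hq]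
    simp [map_sum, hS _ (g _).2, sub_mul, Finset.sum_sub_distrib]
  rw [hsum]
  exact Ideal.sum_mem _ fun i _ => Ideal.mul_mem_mul (hI _) (Ideal.subset_span (g i).2)

namespace MvPolynomial

variable {R : Type*} [CommRing R] {σ τ : Type*}

theorem mem_of_map_eq_zero_of_map_monomial {e : (σ →₀ ℕ) → (τ →₀ ℕ)}
    {φ : MvPolynomial σ R →+ MvPolynomial τ R} (hφ : ∀ A c, φ (monomial A c) = monomial (e A) c)
    {I : Ideal (MvPolynomial σ R)} (hI : ∀ A B, e A = e B → monomial A 1 - monomial B 1 ∈ I)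
    {q : MvPolynomial σ R} (hq : φ q = 0) : q ∈ I := by
  set g := Function.invFun e
  -- `mapDomain g ∘ φ` moves every monomial to a chosen representative of its fibre under `e`.
  have hsub : ∀ p, p - AddMonoidAlgebra.mapDomain g (φ p) ∈ I := by
    intro p
    induction p using MvPolynomial.induction_on' with
    | monomial A c =>
      have hA : e (g (e A)) = e A := Function.invFun_eq ⟨A, rfl⟩
      have hdiff : monomial A c - AddMonoidAlgebra.mapDomain g (φ (monomial A c)) =
          C c * (monomial A 1 - monomial (g (e A)) 1) := by
        rw [hφ, ← single_eq_monomial (e A), AddMonoidAlgebra.mapDomain_single,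
          single_eq_monomial, mul_sub, C_mul_monomial, C_mul_monomial, mul_one]
      rw [hdiff]
      exact Ideal.mul_mem_left _ _ (hI _ _ hA.symm)
    | add p p' hp hp' =>
      rw [map_add, AddMonoidAlgebra.mapDomain_add, add_sub_add_comm]
      exact add_mem hp hp'
  simpa [hq] using hsub q

open Classical in
noncomputable def killVars (s : Set σ) : MvPolynomial σ R →ₐ[R] MvPolynomial σ R :=
  aeval fun i => if i ∈ s then 0 else X i

theorem killVars_X_of_mem {s : Set σ} {i : σ} (hi : i ∈ s) :
    killVars s (X i : MvPolynomial σ R) = 0 := by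
  simp [killVars, hi]

theorem killVars_X_of_notMem {s : Set σ} {i : σ} (hi : i ∉ s) :
    killVars s (X i : MvPolynomial σ R) = X i := by
  simp [killVars, hi]

theorem sub_killVars_mem_span (s : Set σ) (p : MvPolynomial σ R) :
    p - killVars s p ∈ Ideal.span (X '' s) := by
  induction p using MvPolynomial.induction_on with
  | C a => simp [killVars]
  | add p q hp hq =>
    rw [map_add, add_sub_add_comm]
    exact add_mem hp hq
  | mul_X p i hp =>
    by_cases hi : i ∈ s
    · rw [map_mul, killVars_X_of_mem hi, mul_zero, sub_zero]
      exact Ideal.mul_mem_left _ _ (Ideal.subset_span ⟨i, hi, rfl⟩)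
    · rw [map_mul, killVars_X_of_notMem hi, ← sub_mul]
      exact Ideal.mul_mem_right _ _ hp

theorem ker_killVars (s : Set σ) :
    RingHom.ker (killVars (R := R) s) = Ideal.span (X '' s) := by
  refine le_antisymm (fun p hp => ?_) ?_
  · simpa [RingHom.mem_ker.mp hp] using sub_killVars_mem_span s p
  · rw [Ideal.span_le]
    rintro _ ⟨i, hi, rfl⟩
    exact killVars_X_of_mem hi

theorem isPrime_span_X_image [IsDomain R] (s : Set σ) :
    (Ideal.span (X '' s : Set (MvPolynomial σ R))).IsPrime :=
  ker_killVars (R := R) s ▸ RingHom.ker_isPrime _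

noncomputable def minor (i j : σ) (k l : τ) : MvPolynomial (σ × τ) R :=
  X (i, k) * X (j, l) - X (i, l) * X (j, k)

theorem minor_swap_rows (i j : σ) (k l : τ) :
    (minor j i k l : MvPolynomial (σ × τ) R) = -minor i j k l := by
  simp only [minor]
  ring

theorem minor_swap_cols (i j : σ) (k l : τ) :
    (minor i j l k : MvPolynomial (σ × τ) R) = -minor i j k l := by
  simp only [minor]
  ring

theorem minor_mem_of_forall_lt [LinearOrder σ] [LinearOrder τ]
    {I : Ideal (MvPolynomial (σ × τ) R)} {P : τ → τ → Prop} (hP : ∀ k l, P k l → P l k)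
    (h : ∀ i j k l, i < j → k < l → P k l → minor i j k l ∈ I) (i j : σ) {k l : τ}
    (hkl : P k l) : minor i j k l ∈ I := by
  have hrows : ∀ i j, i < j → ∀ k l, P k l → minor i j k l ∈ I := by
    intro i j hij k l hkl
    rcases lt_trichotomy k l with hlt | rfl | hgt
    · exact h i j k l hij hlt hkl
    · simp [minor]
    · rw [← neg_neg (minor i j k l), ← minor_swap_cols]
      exact neg_mem (h i j l k hij hgt (hP k l hkl))
  rcases lt_trichotomy i j with hlt | rfl | hgt
  · exact hrows i j hlt k l hkl
  · simp [minor, mul_comm]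
  · rw [← neg_neg (minor i j k l), ← minor_swap_rows]
    exact neg_mem (hrows j i hgt k l hkl)

variable (R σ τ) in
noncomputable def minorIdeal : Ideal (MvPolynomial (σ × τ) R) :=
  Ideal.span {p | ∃ i j k l, p = minor i j k l}

theorem minor_mem_minorIdeal (i j : σ) (k l : τ) :
    (minor i j k l : MvPolynomial _ R) ∈ minorIdeal R σ τ :=
  Ideal.subset_span ⟨i, j, k, l, rfl⟩

variable (R σ τ) in
noncomputable def segre : MvPolynomial (σ × τ) R →ₐ[R] MvPolynomial (σ ⊕ τ) R :=
  aeval fun p => X (.inl p.1) * X (.inr p.2)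

variable (σ τ) in
noncomputable def segreExponent : (σ × τ →₀ ℕ) →+ (σ ⊕ τ →₀ ℕ) :=
  Finsupp.mapDomain.addMonoidHom (Sum.inl ∘ Prod.fst) +
    Finsupp.mapDomain.addMonoidHom (Sum.inr ∘ Prod.snd)

theorem segreExponent_single (p : σ × τ) (a : ℕ) :
    segreExponent σ τ (Finsupp.single p a) =
      Finsupp.single (.inl p.1) a + Finsupp.single (.inr p.2) a := by
  simp [segreExponent]

theorem segre_monomial (A : σ × τ →₀ ℕ) (c : R) :
    segre R σ τ (monomial A c) = monomial (segreExponent σ τ A) c := by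
  induction A using Finsupp.induction with
  | zero => simp [segre, monomial_zero']
  | single_add p a A _ _ ih =>
    rw [monomial_single_add, map_mul, ih, map_add, segreExponent_single, add_assoc,
      monomial_single_add, monomial_single_add, ← mul_assoc, ← mul_pow, map_pow]
    simp [segre]

theorem segreExponent_inl_ne_zero_iff {A : σ × τ →₀ ℕ} {i : σ} :
    segreExponent σ τ A (.inl i) ≠ 0 ↔ ∃ k, A (i, k) ≠ 0 := by
  classical
  have h0 : Finsupp.mapDomain (Sum.inr ∘ Prod.snd) A (.inl i : σ ⊕ τ) = 0 :=
    Finsupp.mapDomain_of_notMem_range _ _ (by simp)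
  rw [segreExponent, AddMonoidHom.add_apply, Finsupp.add_apply]
  simp only [Finsupp.mapDomain.addMonoidHom_apply, h0, add_zero, ← Finsupp.mem_support_iff,
    Finsupp.mapDomain_support_of_subsingletonAddUnits, Finset.mem_image]
  simp

theorem segreExponent_inr_ne_zero_iff {A : σ × τ →₀ ℕ} {k : τ} :
    segreExponent σ τ A (.inr k) ≠ 0 ↔ ∃ i, A (i, k) ≠ 0 := by
  classical
  have h0 : Finsupp.mapDomain (Sum.inl ∘ Prod.fst) A (.inr k : σ ⊕ τ) = 0 :=
    Finsupp.mapDomain_of_notMem_range _ _ (by simp)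
  rw [segreExponent, AddMonoidHom.add_apply, Finsupp.add_apply]
  simp only [Finsupp.mapDomain.addMonoidHom_apply, h0, zero_add, ← Finsupp.mem_support_iff,
    Finsupp.mapDomain_support_of_subsingletonAddUnits, Finset.mem_image]
  simp

theorem exists_segreExponent_eq_apply_ne_zero {A B : σ × τ →₀ ℕ}
    (h : segreExponent σ τ A = segreExponent σ τ B) {i : σ} {k : τ} (hA : A (i, k) ≠ 0) :
    ∃ B', segreExponent σ τ B' = segreExponent σ τ B ∧ B' (i, k) ≠ 0 ∧
      (monomial B 1 - monomial B' 1 : MvPolynomial (σ × τ) R) ∈ minorIdeal R σ τ := by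
  by_cases hB : B (i, k) ≠ 0
  · exact ⟨B, rfl, hB, by simp⟩
  obtain ⟨l, hl⟩ :=
    segreExponent_inl_ne_zero_iff.mp (h ▸ segreExponent_inl_ne_zero_iff.mpr ⟨k, hA⟩)
  obtain ⟨j, hj⟩ :=
    segreExponent_inr_ne_zero_iff.mp (h ▸ segreExponent_inr_ne_zero_iff.mpr ⟨i, hA⟩)
  obtain ⟨B₁, rfl⟩ := Finsupp.exists_eq_add_single_of_ne_zero hl
  have hne : (j, k) ≠ (i, l) := by
    rintro ⟨⟩
    exact hB hl
  obtain ⟨C, rfl⟩ :=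
    Finsupp.exists_eq_add_single_of_ne_zero (p := (j, k)) (by simpa [hne] using hj)
  refine ⟨C + Finsupp.single (i, k) 1 + Finsupp.single (j, l) 1, ?_, by simp, ?_⟩
  · simp only [map_add, segreExponent_single]
    abel
  · have hswap : (monomial (C + Finsupp.single (j, k) 1 + Finsupp.single (i, l) 1) 1 -
        monomial (C + Finsupp.single (i, k) 1 + Finsupp.single (j, l) 1) 1 :
          MvPolynomial (σ × τ) R) = -(monomial C 1 * minor i j k l) := by
      simp only [monomial_add_single, pow_one, minor]
      ring
    rw [hswap]
    exact neg_mem (Ideal.mul_mem_left _ _ (minor_mem_minorIdeal i j k l))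

theorem monomial_sub_monomial_mem_minorIdeal {A B : σ × τ →₀ ℕ}
    (h : segreExponent σ τ A = segreExponent σ τ B) :
    (monomial A 1 - monomial B 1 : MvPolynomial (σ × τ) R) ∈ minorIdeal R σ τ := by
  induction hd : A.degree using Nat.strong_induction_on generalizing A B with
  | _ d ih =>
  rcases eq_or_ne A 0 with rfl | hA
  · obtain rfl : B = 0 := by
      by_contra hB
      obtain ⟨⟨i, k⟩, hik⟩ := Finsupp.ne_iff.mp hB
      have := segreExponent_inl_ne_zero_iff.mpr ⟨k, hik⟩
      simp [← h] at this
    simp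
  obtain ⟨⟨i, k⟩, hik⟩ := Finsupp.ne_iff.mp hA
  obtain ⟨B', hB', hB'ik, hBB'⟩ := exists_segreExponent_eq_apply_ne_zero (R := R) h hik
  obtain ⟨A₀, rfl⟩ := Finsupp.exists_eq_add_single_of_ne_zero hik
  obtain ⟨B₀, rfl⟩ := Finsupp.exists_eq_add_single_of_ne_zero hB'ik
  have h₀ : segreExponent σ τ A₀ = segreExponent σ τ B₀ :=
    add_right_cancel (by simpa only [map_add] using h.trans hB'.symm)
  have hlt : A₀.degree < d := by
    rw [← hd, map_add, Finsupp.degree_single]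
    omega
  have hfactor : (monomial (A₀ + Finsupp.single (i, k) 1) 1 - monomial B 1 :
        MvPolynomial (σ × τ) R) =
      X (i, k) * (monomial A₀ 1 - monomial B₀ 1) -
        (monomial B 1 - monomial (B₀ + Finsupp.single (i, k) 1) 1) := by
    rw [monomial_add_single, monomial_add_single, pow_one]
    ring
  rw [hfactor]
  exact sub_mem (Ideal.mul_mem_left _ _ (ih _ hlt h₀ rfl)) hBB'

theorem ker_segre : RingHom.ker (segre R σ τ) = minorIdeal R σ τ := by
  refine le_antisymm (fun q hq => ?_) ?_
  · exact mem_of_map_eq_zero_of_map_monomial (φ := (segre R σ τ).toAddMonoidHom)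
      segre_monomial (fun _ _ => monomial_sub_monomial_mem_minorIdeal) hq
  · rw [minorIdeal, Ideal.span_le]
    rintro _ ⟨i, j, k, l, rfl⟩
    simp only [SetLike.mem_coe, RingHom.mem_ker, minor, segre, map_sub, map_mul, aeval_X]
    ring

theorem isPrime_minorIdeal [IsDomain R] : (minorIdeal R σ τ).IsPrime :=
  ker_segre (R := R) (σ := σ) (τ := τ) ▸ RingHom.ker_isPrime _

end MvPolynomial

section PartGeometry

variable {r : ℕ} {ν : Fin r → ℕ}

theorem partStart_add_le_partStart {t w : Fin r} (h : t < w) :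
    partStart ν t + ν t ≤ partStart ν w := by
  rw [partStart, partStart, add_comm, ← Finset.sum_insert Finset.notMem_Iio_self,
    Finset.Iio_insert]
  exact Finset.sum_le_sum_of_subset fun x hx =>
    Finset.mem_Iio.mpr ((Finset.mem_Iic.mp hx).trans_lt h)

theorem eq_of_inPart_of_inPart {t w : Fin r} {j : ℕ} (ht : inPart ν t j) (hw : inPart ν w j) :
    t = w := by
  by_contra hne
  rcases lt_or_gt_of_ne hne with hlt | hlt
  · have := partStart_add_le_partStart (ν := ν) hlt
    exact absurd hw.1 (by have := ht.2; omega)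
  · have := partStart_add_le_partStart (ν := ν) hlt
    exact absurd ht.1 (by have := hw.2; omega)

theorem crossPair_symm {j k : ℕ} (h : crossPair ν j k) : crossPair ν k j :=
  fun w hw => h w hw.symm

theorem crossPair_of_not_inPart {t : Fin r} {j k : ℕ} (hj : ¬ inPart ν t j)
    (hk : inPart ν t k) : crossPair ν j k := by
  rintro w ⟨hwj, hwk⟩
  obtain rfl := eq_of_inPart_of_inPart hwk hk
  exact hj hwj

end PartGeometry

section Multipartite

variable {K : Type} [Field K] {m r n : ℕ} {ν : Fin r → ℕ}

theorem Jcomplete_eq_minorIdeal : Jcomplete K m n = minorIdeal K (Fin m) (Fin n) := by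
  refine le_antisymm (Ideal.span_mono ?_) (Ideal.span_le.mpr ?_)
  · rintro _ ⟨i, j, k, l, -, -, rfl⟩
    exact ⟨i, j, k, l, rfl⟩
  · rintro _ ⟨i, j, k, l, rfl⟩
    exact minor_mem_of_forall_lt (P := fun _ _ => True) (fun _ _ _ => trivial)
      (fun i j k l hij hkl _ => Ideal.subset_span (by exact ⟨i, j, k, l, hij, hkl, rfl⟩))
      i j trivial

theorem minor_mem_Jpartite (i j : Fin m) {k l : Fin n} (h : crossPair ν k l) :
    minor i j k l ∈ Jpartite K m r n ν :=
  minor_mem_of_forall_lt (P := fun k l : Fin n => crossPair ν k l) (fun _ _ => crossPair_symm)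
    (fun i j k l hij hkl h => Ideal.subset_span (by exact ⟨i, j, k, l, hij, hkl, h, rfl⟩)) i j h

theorem Jpartite_le_Jcomplete : Jpartite K m r n ν ≤ Jcomplete K m n := by
  refine Ideal.span_mono ?_
  rintro _ ⟨i, j, k, l, hij, hkl, -, rfl⟩
  exact ⟨i, j, k, l, hij, hkl, rfl⟩

theorem Aideal_eq_span_X (t : Fin r) :
    Aideal K m r n ν t = Ideal.span (X '' {p | ¬ inPart ν t p.2}) := by
  rw [Aideal]
  congr 1
  ext p
  constructor
  · rintro ⟨u, j, hj, rfl⟩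
    exact ⟨(u, j), hj, rfl⟩
  · rintro ⟨⟨u, j⟩, hj, rfl⟩
    exact ⟨u, j, hj, rfl⟩

theorem X_mem_Aideal {t : Fin r} (u : Fin m) {j : Fin n} (hj : ¬ inPart ν t j) :
    X (u, j) ∈ Aideal K m r n ν t :=
  Ideal.subset_span (by exact ⟨u, j, hj, rfl⟩)

theorem minor_mem_Aideal {t : Fin r} (i j : Fin m) {k l : Fin n}
    (h : ¬ inPart ν t k ∨ ¬ inPart ν t l) : minor i j k l ∈ Aideal K m r n ν t := by
  rcases h with hk | hl
  · exact sub_mem (Ideal.mul_mem_right _ _ (X_mem_Aideal i hk))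
      (Ideal.mul_mem_left _ _ (X_mem_Aideal j hk))
  · exact sub_mem (Ideal.mul_mem_left _ _ (X_mem_Aideal j hl))
      (Ideal.mul_mem_right _ _ (X_mem_Aideal i hl))

theorem Jpartite_le_Aideal (t : Fin r) : Jpartite K m r n ν ≤ Aideal K m r n ν t := by
  rw [Jpartite, Ideal.span_le]
  rintro _ ⟨i, j, k, l, -, -, hkl, rfl⟩
  exact minor_mem_Aideal i j (not_and_or.mp (hkl t))

variable (K m n ν) in
noncomputable def partMinorIdeal (t : Fin r) : Ideal (MvPolynomial (Fin m × Fin n) K) :=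
  Ideal.span {p | ∃ (i j : Fin m) (k l : Fin n), inPart ν t k ∧ inPart ν t l ∧ p = minor i j k l}

theorem Jcomplete_le_Jpartite_sup :
    Jcomplete K m n ≤ Jpartite K m r n ν ⊔ ⨆ t, partMinorIdeal K m n ν t := by
  rw [Jcomplete, Ideal.span_le]
  rintro _ ⟨i, j, k, l, hij, hkl, rfl⟩
  by_cases hcross : crossPair ν k l
  · exact Ideal.mem_sup_left (Ideal.subset_span ⟨i, j, k, l, hij, hkl, hcross, rfl⟩)
  · obtain ⟨t, hk, hl⟩ : ∃ t, inPart ν t k ∧ inPart ν t l := by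
      simpa [crossPair] using hcross
    exact Ideal.mem_sup_right
      (Ideal.mem_iSup_of_mem t (Ideal.subset_span ⟨i, j, k, l, hk, hl, rfl⟩))

theorem partMinorIdeal_eq_bot {t : Fin r} (h : ν t = 1) : partMinorIdeal K m n ν t = ⊥ := by
  rw [partMinorIdeal, Ideal.span_eq_bot]
  rintro _ ⟨i, j, k, l, hk, hl, rfl⟩
  obtain rfl : k = l := Fin.ext (by simp only [inPart, h] at hk hl; omega)
  simp [minor]

theorem partMinorIdeal_le_Aideal {t w : Fin r} (h : t ≠ w) :
    partMinorIdeal K m n ν t ≤ Aideal K m r n ν w := by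
  rw [partMinorIdeal, Ideal.span_le]
  rintro _ ⟨i, j, k, l, hk, -, rfl⟩
  exact minor_mem_Aideal i j (.inl fun hw => h (eq_of_inPart_of_inPart hk hw))

theorem Aideal_mul_partMinorIdeal_le (t : Fin r) :
    Aideal K m r n ν t * partMinorIdeal K m n ν t ≤ Jpartite K m r n ν := by
  rw [Aideal, partMinorIdeal, Ideal.span_mul_span', Ideal.span_le]
  rintro _ ⟨_, ⟨u, j, hj, rfl⟩, _, ⟨i, i', k, l, hk, hl, rfl⟩, rfl⟩
  have hjk := crossPair_of_not_inPart hj hk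
  have hjl := crossPair_of_not_inPart hj hl
  have hplucker : (X (u, j) : MvPolynomial (Fin m × Fin n) K) * minor i i' k l =
      X (i, k) * minor u i' j l - X (i', k) * minor u i j l - X (u, l) * minor i i' j k := by
    simp only [minor]
    ring
  beta_reduce
  rw [SetLike.mem_coe, hplucker]
  exact sub_mem (sub_mem (Ideal.mul_mem_left _ _ (minor_mem_Jpartite u i' hjl))
    (Ideal.mul_mem_left _ _ (minor_mem_Jpartite u i hjl)))
    (Ideal.mul_mem_left _ _ (minor_mem_Jpartite i i' hjk))

theorem partMinorIdeal_inf_Aideal_le (t : Fin r) :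
    partMinorIdeal K m n ν t ⊓ Aideal K m r n ν t ≤ Jpartite K m r n ν := by
  set ρ := (killVars (R := K) {p : Fin m × Fin n | ¬ inPart ν t p.2}).toRingHom
  calc partMinorIdeal K m n ν t ⊓ Aideal K m r n ν t
      = RingHom.ker ρ ⊓ partMinorIdeal K m n ν t := by
        rw [inf_comm, Aideal_eq_span_X, ← ker_killVars]
        rfl
    _ ≤ Aideal K m r n ν t * partMinorIdeal K m n ν t := by
        refine RingHom.ker_inf_span_le_mul (fun x => ?_) ?_
        · rw [Aideal_eq_span_X]
          exact sub_killVars_mem_span _ x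
        · rintro _ ⟨i, j, k, l, hk, hl, rfl⟩
          simp [ρ, minor, killVars_X_of_notMem, hk, hl]
    _ ≤ Jpartite K m r n ν := Aideal_mul_partMinorIdeal_le t

theorem Jcomplete_inf_iInf_Aideal_le {s : Fin r} (hone : ∀ t < s, ν t = 1) :
    Jcomplete K m n ⊓ ⨅ k ∈ Finset.Ici s, Aideal K m r n ν k ≤ Jpartite K m r n ν := by
  rintro f ⟨hfJ, hfA⟩
  obtain ⟨g, hg, _, hq, rfl⟩ := Submodule.mem_sup.mp (Jcomplete_le_Jpartite_sup (ν := ν) hfJ)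
  obtain ⟨q, hqt, rfl⟩ := (Submodule.mem_iSup_iff_exists_finsupp _ _).mp hq
  rw [Finsupp.sum_fintype _ _ (fun _ => rfl)] at hfA ⊢
  refine add_mem hg (Ideal.sum_mem _ fun t _ => ?_)
  rcases lt_or_ge t s with hts | hst
  · have hq0 := hqt t
    rw [partMinorIdeal_eq_bot (hone t hts), Ideal.mem_bot] at hq0
    rw [hq0]
    exact zero_mem _
  · refine partMinorIdeal_inf_Aideal_le t ⟨hqt t, ?_⟩
    have hfAt : g + ∑ w, q w ∈ Aideal K m r n ν t :=
      (Submodule.mem_iInf _).mp ((Submodule.mem_iInf _).mp hfA t) (Finset.mem_Ici.mpr hst)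
    have hrest : ∑ w ∈ Finset.univ.erase t, q w ∈ Aideal K m r n ν t :=
      Ideal.sum_mem _ fun w hw => partMinorIdeal_le_Aideal (Finset.ne_of_mem_erase hw) (hqt w)
    rw [← Finset.add_sum_erase _ _ (Finset.mem_univ t)] at hfAt
    simpa [add_comm, add_assoc] using sub_mem (sub_mem hfAt (Jpartite_le_Aideal t hg)) hrest

end Multipartite

theorem stmt0_general (K : Type) [Field K] (m r : ℕ)
    (ν : Fin r → ℕ) (s : Fin r)
    (hone : ∀ i : Fin r, i < s → ν i = 1)
    (n : ℕ) :
    Jpartite K m r n ν = Jcomplete K m n ⊓ (⨅ k ∈ Finset.Ici s, Aideal K m r n ν k) ∧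
    (Jcomplete K m n).IsPrime ∧ ∀ k ∈ Finset.Ici s, (Aideal K m r n ν k).IsPrime := by
  refine ⟨le_antisymm ?_ (Jcomplete_inf_iInf_Aideal_le hone), ?_, fun k _ => ?_⟩
  · exact le_inf Jpartite_le_Jcomplete (le_iInf₂ fun k _ => Jpartite_le_Aideal k)
  · exact Jcomplete_eq_minorIdeal (K := K) ▸ isPrime_minorIdeal
  · exact Aideal_eq_span_X (K := K) k ▸ isPrime_span_X_image _

/-- Under the setting, `J_{K_m,G} = J_{K_m,G̃} ∩ A_s ∩ A_{s+1} ∩ ⋯ ∩ A_r`,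
and all the ideals appearing on the right are prime, so this is the minimal primary
decomposition of `J_{K_m,G}`. -/
theorem stmt0 (K : Type) [Field K] (m r : ℕ) (hm : 2 ≤ m) (hr : 2 ≤ r)
    (ν : Fin r → ℕ) (s : Fin r) (hmono : Monotone ν)
    (hone : ∀ i : Fin r, i < s → ν i = 1) (hs : 2 ≤ ν s)
    (n : ℕ) (hn : n = ∑ i, ν i) :
    Jpartite K m r n ν = Jcomplete K m n ⊓ (⨅ k ∈ Finset.Ici s, Aideal K m r n ν k) ∧
    (Jcomplete K m n).IsPrime ∧ ∀ k ∈ Finset.Ici s, (Aideal K m r n ν k).IsPrime :=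
  stmt0_general K m r ν s hone n
end

section
/- Under the stated setting, the collection of subsets of [n] with the cut point property for the complete r-partite graph G is exactly C(G) = {∅, T_s, T_{s+1}, …, T_r}, where T_i = ⋃_{j≠i} V_j. -/
/-- The complete multipartite graph `K_{n_1,…,n_r}` on `Fin n`, `n = Σ ν i`:
two vertices are adjacent iff they lie in different parts. -/
def partiteGraph (r n : ℕ) (ν : Fin r → ℕ) : SimpleGraph (Fin n) where
  Adj u v := u ≠ v ∧ crossPair ν u v
  symm := by
    constructor
    rintro u v ⟨h1, h2⟩
    exact ⟨h1.symm, fun k hk => h2 k ⟨hk.2, hk.1⟩⟩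
  loopless := ⟨fun u h => h.1 rfl⟩

/-- The number of connected components `c(G|_A)` of the subgraph of `G` induced on `A`. -/
noncomputable def numComponents {V : Type} (G : SimpleGraph V) (A : Set V) : ℕ :=
  Nat.card (G.induce A).ConnectedComponent

/-- A subset `T` of the vertices of `G` has the cut point property if every `v ∈ T`
is a cut point of the induced subgraph `G \ (T \ {v})`, i.e.
`c(G \ (T \ {v})) < c((G \ (T \ {v})) \ v) = c(G \ T)`. -/
def HasCutPointProperty {V : Type} (G : SimpleGraph V) (T : Set V) : Prop :=
  ∀ v ∈ T, numComponents G (T \ {v})ᶜ < numComponents G Tᶜ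

/-!
`K_{n_1,…,n_r}` is the pullback of the complete graph on the set of parts along the map sending
a vertex to its part. An induced subgraph of such a pullback is connected as soon as it meets two
fibres, and edgeless when it lies in a single fibre. Hence `v ∈ T` can be a cut point of
`G \ (T \ {v})` only if `Tᶜ` lies in one fibre `V_k` and `v ∉ V_k`; this forces `T = V_kᶜ`, and
then `c(V_k ∪ {v}) = 1 < c(V_k) = n_k` holds exactly when `n_k ≥ 2`.
-/

open SimpleGraph

section numComponents

variable {V : Type} {G : SimpleGraph V} {A T : Set V}

lemma numComponents_eq_one_of_connected (h : (G.induce A).Connected) :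
    numComponents G A = 1 := by
  rw [numComponents, Nat.card_eq_one_iff_unique]
  exact ⟨h.preconnected.subsingleton_connectedComponent,
    h.nonempty.map (G.induce A).connectedComponentMk⟩

lemma numComponents_eq_ncard_of_induce_eq_bot (h : G.induce A = ⊥) :
    numComponents G A = A.ncard := by
  rw [numComponents, h, ← Nat.card_coe_set_eq]
  refine (Nat.card_eq_of_bijective (⊥ : SimpleGraph A).connectedComponentMk
    ⟨fun a b hab => ?_, fun c => c.exists_rep⟩).symm
  exact reachable_bot.mp (ConnectedComponent.eq.mp hab)

lemma nonempty_of_numComponents_pos (h : 0 < numComponents G A) : A.Nonempty := by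
  obtain ⟨c⟩ := (Nat.card_pos_iff.mp h).1
  exact ⟨_, c.exists_rep.choose.2⟩

lemma hasCutPointProperty_iff :
    HasCutPointProperty G T ↔
      ∀ v ∈ T, numComponents G (insert v Tᶜ) < numComponents G Tᶜ := by
  simp only [HasCutPointProperty, Set.compl_sdiff, Set.singleton_union]

end numComponents

section comapTop

variable {V : Type} {ι : Type*} {f : V → ι} {A T : Set V}

lemma connected_induce_comap_top {u w : V} (hu : u ∈ A) (hw : w ∈ A) (huw : f u ≠ f w) :
    (((⊤ : SimpleGraph ι).comap f).induce A).Connected := by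
  have adj : ∀ x y : A, f x ≠ f y → (((⊤ : SimpleGraph ι).comap f).induce A).Adj x y :=
    fun _ _ h => h
  refine (connected_iff _).mpr ⟨fun x y => ?_, ⟨⟨u, hu⟩⟩⟩
  by_cases hxy : f x = f y
  · obtain ⟨z, hz⟩ : ∃ z : A, f z ≠ f x := by
      by_cases hux : f u = f x
      · exact ⟨⟨w, hw⟩, fun h => huw (hux.trans h.symm)⟩
      · exact ⟨⟨u, hu⟩, hux⟩
    exact (adj x z (Ne.symm hz)).reachable.trans (adj z y (hxy ▸ hz)).reachable
  · exact (adj x y hxy).reachable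

lemma induce_comap_top_eq_bot {k : ι} (hA : A ⊆ f ⁻¹' {k}) :
    ((⊤ : SimpleGraph ι).comap f).induce A = ⊥ := by
  ext x y
  simp only [comap_adj, Function.Embedding.coe_subtype, top_adj, bot_adj, iff_false, not_not]
  rw [hA x.2, hA y.2]

lemma exists_fiber_of_numComponents_insert_lt {v : V}
    (h : numComponents ((⊤ : SimpleGraph ι).comap f) (insert v A) <
      numComponents ((⊤ : SimpleGraph ι).comap f) A) :
    A.Nonempty ∧ ∃ k, A ⊆ f ⁻¹' {k} ∧ f v ≠ k := by
  obtain ⟨u, hu⟩ := nonempty_of_numComponents_pos (Nat.zero_lt_of_lt h)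
  have hA : A ⊆ f ⁻¹' {f u} := by
    intro w hw
    by_contra huw
    have h₁ := numComponents_eq_one_of_connected
      (connected_induce_comap_top hu hw (Ne.symm huw))
    have h₂ := numComponents_eq_one_of_connected (connected_induce_comap_top
      (Set.mem_insert_of_mem v hu) (Set.mem_insert_of_mem v hw) (Ne.symm huw))
    omega
  refine ⟨⟨u, hu⟩, f u, hA, fun hv => ?_⟩
  have hvA : insert v A ⊆ f ⁻¹' {f u} := Set.insert_subset hv hA
  rw [numComponents_eq_ncard_of_induce_eq_bot (induce_comap_top_eq_bot hA),
    numComponents_eq_ncard_of_induce_eq_bot (induce_comap_top_eq_bot hvA)] at h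
  have hfin : (insert v A).Finite := (Set.finite_of_ncard_pos (Nat.zero_lt_of_lt h)).insert v
  exact (Set.ncard_le_ncard (Set.subset_insert v A) hfin).not_gt h

lemma numComponents_insert_fiber_lt_iff {v : V} {k : ι} (hv : f v ≠ k)
    (hk : (f ⁻¹' {k}).Nonempty) :
    numComponents ((⊤ : SimpleGraph ι).comap f) (insert v (f ⁻¹' {k})) <
      numComponents ((⊤ : SimpleGraph ι).comap f) (f ⁻¹' {k}) ↔ 1 < (f ⁻¹' {k}).ncard := by
  obtain ⟨u, hu⟩ := hk
  rw [numComponents_eq_ncard_of_induce_eq_bot (induce_comap_top_eq_bot subset_rfl),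
    numComponents_eq_one_of_connected (connected_induce_comap_top (Set.mem_insert v _)
      (Set.mem_insert_of_mem v hu) (hu.symm ▸ hv))]

theorem hasCutPointProperty_comap_top_iff :
    HasCutPointProperty ((⊤ : SimpleGraph ι).comap f) T ↔
      T = ∅ ∨ ∃ k, 1 < (f ⁻¹' {k}).ncard ∧ T = (f ⁻¹' {k})ᶜ := by
  rw [hasCutPointProperty_iff]
  constructor
  · intro hT
    rcases T.eq_empty_or_nonempty with hT₀ | ⟨v₀, hv₀⟩
    · exact Or.inl hT₀
    obtain ⟨⟨u, hu⟩, k, hk, -⟩ := exists_fiber_of_numComponents_insert_lt (hT v₀ hv₀)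
    have hTk : T = (f ⁻¹' {k})ᶜ := by
      refine subset_antisymm (fun v hv hvk => ?_) (Set.compl_subset_comm.mp hk)
      obtain ⟨-, k', hk', hvk'⟩ := exists_fiber_of_numComponents_insert_lt (hT v hv)
      exact hvk' ((hvk.trans (hk hu).symm).trans (hk' hu))
    subst hTk
    rw [compl_compl] at hT
    exact Or.inr ⟨k, (numComponents_insert_fiber_lt_iff hv₀ ⟨u, hk hu⟩).mp (hT v₀ hv₀), rfl⟩
  · rintro (rfl | ⟨k, hk, rfl⟩)
    · simp
    · intro v hv
      rw [compl_compl]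
      exact (numComponents_insert_fiber_lt_iff hv
        (Set.nonempty_of_ncard_ne_zero (by omega))).mpr hk

end comapTop

section partite

variable {r : ℕ} {ν : Fin r → ℕ}

lemma val_finSigmaFinEquiv (p : (k : Fin r) × Fin (ν k)) :
    (finSigmaFinEquiv p : ℕ) = partStart ν p.1 + p.2 := by
  rw [finSigmaFinEquiv_apply, partStart]
  congr 1
  exact Finset.sum_nbij (Fin.castLE p.1.2.le) (fun i _ => by simp [Fin.lt_def])
    (Fin.castLE_injective _).injOn
    (fun j hj => ⟨⟨j, Fin.lt_def.1 (Finset.mem_Iio.1 hj)⟩,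
      Finset.mem_coe.2 (Finset.mem_univ _), rfl⟩)
    (fun _ _ => rfl)

def partOf (ν : Fin r → ℕ) (v : Fin (∑ i, ν i)) : Fin r := (finSigmaFinEquiv.symm v).1

lemma inPart_iff_partOf_eq {k : Fin r} {v : Fin (∑ i, ν i)} :
    inPart ν k v ↔ partOf ν v = k := by
  constructor
  · rintro ⟨hlo, hhi⟩
    have hv : finSigmaFinEquiv ⟨k, ⟨v - partStart ν k, by omega⟩⟩ = v := by
      ext
      rw [val_finSigmaFinEquiv]
      dsimp only
      omega
    rw [partOf, ← hv, Equiv.symm_apply_apply]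
  · rintro rfl
    obtain ⟨p, rfl⟩ := finSigmaFinEquiv.surjective v
    rw [partOf, Equiv.symm_apply_apply, inPart, val_finSigmaFinEquiv]
    omega

lemma partiteGraph_eq_comap_partOf :
    partiteGraph r (∑ i, ν i) ν = (⊤ : SimpleGraph (Fin r)).comap (partOf ν) := by
  ext u v
  simp only [partiteGraph, crossPair, inPart_iff_partOf_eq, comap_adj, top_adj]
  exact ⟨fun ⟨_, h⟩ e => h _ ⟨e, rfl⟩,
    fun h => ⟨fun e => h (congrArg _ e), fun k hk => h (hk.1.trans hk.2.symm)⟩⟩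

lemma ncard_partOf_preimage_singleton (k : Fin r) : (partOf ν ⁻¹' {k}).ncard = ν k := by
  set g : Fin (ν k) → Fin (∑ i, ν i) := fun t => finSigmaFinEquiv ⟨k, t⟩
  have hrange : partOf ν ⁻¹' {k} = Set.range g := by
    ext v
    obtain ⟨⟨k', t⟩, rfl⟩ := finSigmaFinEquiv.surjective v
    simp only [Set.mem_preimage, Set.mem_singleton_iff, partOf, Equiv.symm_apply_apply]
    constructor
    · rintro rfl
      exact ⟨t, rfl⟩
    · rintro ⟨t', ht'⟩
      exact congrArg Sigma.fst (finSigmaFinEquiv.injective ht').symm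
  rw [hrange, Set.ncard_range_of_injective (f := g)
    (finSigmaFinEquiv.injective.comp sigma_mk_injective), Nat.card_fin]

end partite

theorem stmt2_general (r : ℕ)
    (ν : Fin r → ℕ) (s : Fin r) (hmono : Monotone ν)
    (hone : ∀ i : Fin r, i < s → ν i = 1) (hs : 2 ≤ ν s)
    (n : ℕ) (hn : n = ∑ i, ν i) :
    {T : Set (Fin n) | HasCutPointProperty (partiteGraph r n ν) T} =
      insert (∅ : Set (Fin n))
        {T : Set (Fin n) | ∃ k : Fin r, s ≤ k ∧ T = {v : Fin n | ¬ inPart ν k (v : ℕ)}} := by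
  subst hn
  ext T
  rw [Set.mem_ofPred_eq, partiteGraph_eq_comap_partOf, hasCutPointProperty_comap_top_iff,
    Set.mem_insert_iff, Set.mem_ofPred_eq]
  refine or_congr_right (exists_congr fun k => ?_)
  have hfiber : partOf ν ⁻¹' {k} = {v : Fin (∑ i, ν i) | inPart ν k v} := by
    ext v
    exact inPart_iff_partOf_eq.symm
  have hlarge : 1 < ν k ↔ s ≤ k :=
    ⟨fun h => not_lt.mp fun hks => h.ne' (hone k hks), fun h => hs.trans (hmono h)⟩
  rw [ncard_partOf_preimage_singleton, hlarge, hfiber, Set.compl_ofPred]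

/-- For the complete `r`-partite graph `G = K_{n_1,…,n_r}` as in the
setting, `C(G) = {∅, T_s, T_{s+1}, …, T_r}`, where `T_k = ⋃_{i ≠ k} V_i` is the
complement of the `k`-th part `V_k`. -/
theorem stmt2 (r : ℕ) (hr : 2 ≤ r)
    (ν : Fin r → ℕ) (s : Fin r) (hmono : Monotone ν)
    (hone : ∀ i : Fin r, i < s → ν i = 1) (hs : 2 ≤ ν s)
    (n : ℕ) (hn : n = ∑ i, ν i) :
    {T : Set (Fin n) | HasCutPointProperty (partiteGraph r n ν) T} =
      insert (∅ : Set (Fin n))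
        {T : Set (Fin n) | ∃ k : Fin r, s ≤ k ∧ T = {v : Fin n | ¬ inPart ν k (v : ℕ)}} :=
  stmt2_general r ν s hmono hone hs n hn
end
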